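/- arXiv:2212.01198 — 4 statements merged into one kernel-verified Lean document; each statement's English description precedes it below -/
import Mathlib

section
/- If κ is a regular cardinal with κ^{<κ} = κ and μ ≤ 2^κ, then the Cohen forcing Add(κ, μ) (partial functions from κ × μ to 2 of size < κ, ordered by reverse inclusion) is strongly κ-centered. -/
/-!
Fix an injection `e : β → (α → Bool)`. A colour is a pair `⟨A, h⟩` of a small `A ⊆ α` and a small
partial function `h` on `α × (A → Bool)`; it fits a condition `p` when `p (a, b) = h (a, e b ↾ A)`
wherever `p` is defined. Every condition has a fitting colour (take `A` separating the traces `e b`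
of the `β`-coordinates used by `p`), and `2^{<κ} ≤ κ` leaves only `κ` colours. Colour each
condition by its least fitting colour in a well-order of all colours. If `p₁, …, pₙ` have colour
`c`, the condition `q` that reads `c` on the union of their domains extends them all and is fitted
by `c`; since `q` extends `p₁`, every colour fitting `q` fits `p₁`, so `c` is also the least
colour of `q`.
-/

universe u

/-- A condition of Cohen forcing `Add(κ, μ)`: a partial function from `κ × μ`
(represented by `α × β` with `#α = κ`, `#β = μ`) to `2` whose domain has size `< κ`. -/
structure CohenCond (α β : Type u) (κ : Cardinal.{u}) : Type u where
  toFun : α × β → Option Bool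
  small : Cardinal.mk {x : α × β // toFun x ≠ none} < κ

def CohenLe {α β : Type u} {κ : Cardinal.{u}} (p q : CohenCond α β κ) : Prop :=
  ∀ x b, q.toFun x = some b → p.toFun x = some b

open Cardinal Set

theorem Cardinal.mk_subset_mk_lt_le_of_isRegular {X : Type u} {κ : Cardinal.{u}} (hX : #X ≤ κ)
    (hκ : κ.IsRegular) (h2 : 2 ^< κ ≤ κ) : #{s : Set X // #s < κ} ≤ κ := by
  let T := κ.ord.ToType
  have hT : #T = κ := mk_ord_toType κ
  have hbounded : ∀ s : Set T, #s < κ → ∃ i, s ⊆ Iio i := by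
    intro s hs
    have : ¬ IsCofinal s := fun hcof =>
      ((Order.cof_le hcof).trans_lt hs).ne (by rw [Ordinal.cof_toType, hκ.cof_ord])
    simpa only [not_isCofinal_iff, subset_def, mem_Iio] using this
  have hT_small : #{s : Set T // #s < κ} ≤ κ := calc
    #{s : Set T // #s < κ} ≤ #(⋃ i : T, 𝒫 (Iio i)) :=
        mk_le_mk_of_subset fun s hs => mem_iUnion.2 (hbounded s hs)
    _ ≤ sum fun i : T => #(𝒫 (Iio i)) := mk_iUnion_le_sum_mk
    _ ≤ sum fun _ : T => κ := sum_le_sum _ _ fun i => by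
        rw [mk_powerset]
        exact (le_powerlt 2 ((mk_Iio_lt i (by rw [hT, Ordinal.type_toType])).trans_eq hT)).trans h2
    _ = κ := by rw [sum_const', hT, mul_eq_self hκ.aleph0_le]
  obtain ⟨f⟩ : Nonempty (X ↪ T) := (le_def X T).1 (hT ▸ hX)
  refine (mk_le_of_injective (f := fun s : {s : Set X // #s < κ} =>
    (⟨f '' s.1, mk_image_le.trans_lt s.2⟩ : {s : Set T // #s < κ})) ?_).trans hT_small
  intro s t hst
  exact Subtype.ext (image_injective.2 f.injective (congrArg Subtype.val hst))

theorem Cardinal.mk_biUnion_finset_lt {ι X : Type u} {κ : Cardinal.{u}} (hκ : ℵ₀ ≤ κ)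
    (s : Finset ι) {t : ι → Set X} (ht : ∀ i ∈ s, #(t i) < κ) : #(⋃ i ∈ s, t i) < κ := by
  classical
  induction s using Finset.induction_on with
  | empty => simpa using aleph0_pos.trans_le hκ
  | insert i s _ ih =>
    rw [Finset.set_biUnion_insert]
    exact (mk_union_le _ _).trans_lt (add_lt_of_lt hκ (ht i (Finset.mem_insert_self i s))
      (ih fun j hj => ht j (Finset.mem_insert_of_mem hj)))

theorem Function.Injective.exists_injOn_domRestrict {α β : Type u} {γ : Type*} {e : β → α → γ}
    (he : Function.Injective e) {κ : Cardinal.{u}} (hκ : ℵ₀ ≤ κ) {S : Set β} (hS : #S < κ) :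
    ∃ A : Set α, #A < κ ∧ S.InjOn fun b => A.domRestrict (e b) := by
  let Pairs := {z : S × S // z.1 ≠ z.2}
  have hsep (z : Pairs) : ∃ a, e z.1.1 a ≠ e z.1.2 a :=
    Function.ne_iff.1 (he.ne (Subtype.coe_ne_coe.2 z.2))
  choose sep hsep using hsep
  refine ⟨range sep, mk_range_le.trans_lt ?_, fun b hb b' hb' hbb' => by_contra fun hne => ?_⟩
  · exact (mk_subtype_le _).trans_lt (by simpa using mul_lt_of_lt hκ hS hS)
  · let z : Pairs := ⟨(⟨b, hb⟩, ⟨b', hb'⟩), fun h => hne (congrArg Subtype.val h)⟩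
    exact hsep z (congrFun hbb' ⟨sep z, mem_range_self z⟩)

namespace CohenCond

variable {X Y : Type u} {κ : Cardinal.{u}}

theorem ext_toFun {p q : CohenCond X Y κ} (h : p.toFun = q.toFun) : p = q := by
  cases p; cases q; cases h; rfl

theorem exists_forall_le_of_forall_extends (hκ : ℵ₀ ≤ κ) (s : Finset (CohenCond X Y κ))
    (H : X × Y → Option Bool) (hH : ∀ p ∈ s, ∀ x v, p.toFun x = some v → H x = some v) :
    ∃ q : CohenCond X Y κ, (∀ p ∈ s, CohenLe q p) ∧ ∀ x v, q.toFun x = some v → H x = some v := by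
  classical
  let toFun x := if ∃ p ∈ s, p.toFun x ≠ none then H x else none
  have hdom : {x | toFun x ≠ none} ⊆ ⋃ p ∈ s, {x | p.toFun x ≠ none} := fun x hx => by
    by_contra h
    exact hx (if_neg (by simpa using h))
  refine ⟨⟨toFun, (mk_le_mk_of_subset hdom).trans_lt
    (mk_biUnion_finset_lt hκ s fun p _ => p.small)⟩, fun p hp x v hpx => ?_, fun x v hx => ?_⟩
  · have hx : ∃ p ∈ s, p.toFun x ≠ none := ⟨p, hp, by simp [hpx]⟩
    simpa [toFun, hx] using hH p hp x v hpx
  · by_cases h : ∃ p ∈ s, p.toFun x ≠ none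
    · simpa [toFun, h] using hx
    · simp [toFun, h] at hx

theorem mk_le (hκ : κ.IsRegular) (h2 : 2 ^< κ ≤ κ) (hXY : #(X × Y) ≤ κ) :
    #(CohenCond X Y κ) ≤ κ := by
  let graph (p : CohenCond X Y κ) : Set ((X × Y) × Bool) := {z | p.toFun z.1 = some z.2}
  have hgraph (p : CohenCond X Y κ) : #(graph p) < κ :=
    (mk_le_of_injective (f := fun z : graph p => (⟨z.1.1, by simp [z.2.out]⟩ :
      {x // p.toFun x ≠ none})) fun z w hzw => by
        have h1 : z.1.1 = w.1.1 := congrArg Subtype.val hzw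
        have hv : some z.1.2 = some w.1.2 := by rw [← z.2.out, ← w.2.out, h1]
        exact Subtype.ext (Prod.ext h1 (Option.some_injective _ hv))).trans_lt p.small
  have hgraph_inj : Function.Injective fun p =>
      (⟨graph p, hgraph p⟩ : {s : Set ((X × Y) × Bool) // #s < κ}) := by
    intro p q hpq
    refine ext_toFun (funext fun x => ?_)
    have hmem (v : Bool) : p.toFun x = some v ↔ q.toFun x = some v :=
      Set.ext_iff.1 (congrArg Subtype.val hpq) (x, v)
    cases hp : p.toFun x <;> cases hq : q.toFun x <;> simp_all
  refine (mk_le_of_injective hgraph_inj).trans (mk_subset_mk_lt_le_of_isRegular ?_ hκ h2)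
  rw [mk_prod, lift_uzero, mk_bool, lift_ofNat]
  calc #(X × Y) * 2 ≤ κ * κ := mul_le_mul' hXY (hκ.nat_lt 2).le
    _ = κ := mul_eq_self hκ.aleph0_le

end CohenCond

def CohenColor (α : Type u) (κ : Cardinal.{u}) : Type u :=
  Σ A : {A : Set α // #A < κ}, CohenCond α (A.1 → Bool) κ

namespace CohenColor

variable {α β : Type u} {κ : Cardinal.{u}}

def toFun (e : β → α → Bool) (c : CohenColor α κ) (x : α × β) : Option Bool :=
  c.2.toFun (x.1, c.1.1.domRestrict (e x.2))

theorem mk_le (hκ : κ.IsRegular) (h2 : 2 ^< κ ≤ κ) (hα : #α ≤ κ) : #(CohenColor α κ) ≤ κ := by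
  have hsupp : #{A : Set α // #A < κ} ≤ κ := mk_subset_mk_lt_le_of_isRegular hα hκ h2
  refine (mk_sigma _).trans_le
    ((sum_le_sum _ (fun _ => κ) fun A => CohenCond.mk_le hκ h2 ?_).trans ?_)
  · rw [mk_prod, lift_id, mk_arrow, mk_bool, lift_ofNat, lift_uzero, lift_id]
    calc #α * 2 ^ #A.1 ≤ κ * κ := mul_le_mul' hα ((le_powerlt 2 A.2).trans h2)
      _ = κ := mul_eq_self hκ.aleph0_le
  · calc sum (fun _ : {A : Set α // #A < κ} => κ) = #{A : Set α // #A < κ} * κ := sum_const' _ κ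
      _ ≤ κ * κ := mul_le_mul' hsupp le_rfl
      _ = κ := mul_eq_self hκ.aleph0_le

end CohenColor

namespace CohenCond

variable {α β : Type u} {κ : Cardinal.{u}}

def Fits (e : β → α → Bool) (p : CohenCond α β κ) (c : CohenColor α κ) : Prop :=
  ∀ x v, p.toFun x = some v → c.toFun e x = some v

theorem exists_fits {e : β → α → Bool} (he : Function.Injective e) (hκ : ℵ₀ ≤ κ)
    (p : CohenCond α β κ) : ∃ c : CohenColor α κ, p.Fits e c := by
  classical
  let S := Prod.snd '' {x | p.toFun x ≠ none}
  obtain ⟨A, hA, hinj⟩ := he.exists_injOn_domRestrict hκ (S := S) (mk_image_le.trans_lt p.small)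
  let r b : A → Bool := A.domRestrict (e b)
  let h (y : α × (A → Bool)) : Option Bool :=
    if H : ∃ b, r b = y.2 ∧ p.toFun (y.1, b) ≠ none then p.toFun (y.1, H.choose) else none
  have hchoose {y} (hy : h y ≠ none) : ∃ b, r b = y.2 ∧ p.toFun (y.1, b) ≠ none := by
    by_contra H
    exact hy (dif_neg H)
  have hsmall : #{y // h y ≠ none} < κ := by
    refine (mk_le_of_injective (f := fun y : {y // h y ≠ none} =>
      (⟨(y.1.1, (hchoose y.2).choose), (hchoose y.2).choose_spec.2⟩ :
        {x // p.toFun x ≠ none})) fun y y' hyy' => ?_).trans_lt p.small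
    have h1 : y.1.1 = y'.1.1 := congrArg (·.1.1) hyy'
    have h2 : (hchoose y.2).choose = (hchoose y'.2).choose := congrArg (·.1.2) hyy'
    refine Subtype.ext (Prod.ext h1 ?_)
    rw [← (hchoose y.2).choose_spec.1, ← (hchoose y'.2).choose_spec.1, h2]
  refine ⟨⟨⟨A, hA⟩, ⟨h, hsmall⟩⟩, fun ⟨a, b⟩ v hv => ?_⟩
  have H : ∃ b', r b' = r b ∧ p.toFun (a, b') ≠ none := ⟨b, rfl, by simp [hv]⟩
  have hb : H.choose = b :=
    hinj ⟨(a, _), H.choose_spec.2, rfl⟩ ⟨(a, b), by simp [hv], rfl⟩ H.choose_spec.1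
  change (if H : _ then _ else _) = _
  rw [dif_pos H, hb, hv]

end CohenCond

/-- If `κ` is regular with `κ^{<κ} = κ` and `μ ≤ 2^κ`, then `Add(κ, μ)` is strongly
`κ`-centered: it can be partitioned into `κ` many cells such that finitely many
conditions lying in a common cell always have a common lower bound in that cell. -/
theorem cohen_stronglyCentered {α β : Type u} (κ : Cardinal.{u})
    (hκα : Cardinal.mk α = κ) (hreg : κ.IsRegular) (hpow : κ ^< κ = κ)
    (hμ : Cardinal.mk β ≤ 2 ^ κ) :
    ∃ (ι : Type u) (f : CohenCond α β κ → ι), Cardinal.mk ι = κ ∧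
      ∀ (ν : ι) (s : Finset (CohenCond α β κ)), s.Nonempty → (∀ p ∈ s, f p = ν) →
        ∃ q, f q = ν ∧ ∀ p ∈ s, CohenLe q p := by
  have h2 : 2 ^< κ ≤ κ := powerlt_le.2 fun x hx =>
    (power_le_power_right (hreg.nat_lt 2).le).trans ((le_powerlt κ hx).trans hpow.le)
  obtain ⟨e⟩ : Nonempty (β ↪ (α → Bool)) := (le_def _ _).1 (hμ.trans_eq (by simp [hκα]))
  obtain ⟨j⟩ : Nonempty (CohenColor α κ ↪ α) :=
    (le_def _ _).1 ((CohenColor.mk_le hreg h2 hκα.le).trans hκα.ge)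
  have wf := (WellOrderingRel.isWellOrder (α := CohenColor α κ)).wf
  let color (p : CohenCond α β κ) : CohenColor α κ :=
    wf.min {c | p.Fits e c} (CohenCond.exists_fits e.injective hreg.aleph0_le p)
  refine ⟨α, fun p => j (color p), hκα, fun ν s ⟨p₀, hp₀⟩ hs => ?_⟩
  have hcolor : ∀ p ∈ s, color p = color p₀ := fun p hp =>
    j.injective ((hs p hp).trans (hs p₀ hp₀).symm)
  obtain ⟨q, hqs, hq⟩ := CohenCond.exists_forall_le_of_forall_extends hreg.aleph0_le s
    ((color p₀).toFun e) fun p hp => hcolor p hp ▸ wf.min_mem {c | p.Fits e c} _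
  have hq_color : color q = color p₀ :=
    wf.min_eq_of_forall_not_lt (s := {c | q.Fits e c}) hq fun c hc =>
      wf.not_lt_min {c | p₀.Fits e c} (x := c) fun x v hx => hc x v (hqs p₀ hp₀ x v hx)
  exact ⟨q, by simp only [hq_color, hs p₀ hp₀], hqs⟩
end

section
/- Fast function forcing tails are highly closed: if γ ≤ μ are inaccessible, then the posets F_{[γ,μ)} and F_{(γ,μ)} (fast function forcing with domain restricted to [γ,μ), respectively (γ,μ)) are γ^+-directed closed. -/
universe u

/-- The ordinal `o` is an inaccessible cardinal. -/
def IsInaccOrd (o : Ordinal.{u}) : Prop :=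
  o.card.IsInaccessible ∧ o = o.card.ord

/-- A condition of (a restricted version of) Woodin's fast function forcing at `μ`:
a partial function, with domain contained in `D` (consisting of inaccessibles) and
values below `hi`, of size `< μ`, such that `p[γ] ⊆ γ` and `|p ↾ γ| < γ` for every
`γ` in its domain. -/
structure FFCond (D : Set Ordinal.{u}) (hi : Ordinal.{u}) (μ : Cardinal.{u}) :
    Type (u + 1) where
  toFun : Ordinal.{u} → Option Ordinal.{u}
  dom_sub : ∀ o, toFun o ≠ none → o ∈ D
  dom_inacc : ∀ o, toFun o ≠ none → IsInaccOrd o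
  ran_lt : ∀ o v, toFun o = some v → v < hi
  below : ∀ γ, toFun γ ≠ none → ∀ x v, x < γ → toFun x = some v → v < γ
  small : Cardinal.mk {o : Ordinal.{u} // toFun o ≠ none} < Cardinal.lift.{u + 1} μ
  loc : ∀ γ, toFun γ ≠ none →
    Cardinal.mk {x : Ordinal.{u} // x < γ ∧ toFun x ≠ none} < Cardinal.lift.{u + 1} γ.card

/-- Fast function conditions are ordered by reverse inclusion. -/
instance {D : Set Ordinal.{u}} {hi : Ordinal.{u}} {μ : Cardinal.{u}} :
    Preorder (FFCond D hi μ) where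
  le p q := ∀ o v, q.toFun o = some v → p.toFun o = some v
  le_refl _ _ _ h := h
  le_trans _ _ _ hab hbc o v h := hab o v (hbc o v h)

/-- A poset is `γ⁺`-directed closed: every directed subset of size `≤ γ` has a
lower bound. -/
def DirClosed (P : Type (u + 1)) [Preorder P] (γ : Cardinal.{u}) : Prop :=
  ∀ S : Set P, Cardinal.mk S ≤ Cardinal.lift.{u + 1} γ →
    (∀ a ∈ S, ∀ b ∈ S, ∃ c ∈ S, c ≤ a ∧ c ≤ b) → ∃ l : P, ∀ a ∈ S, l ≤ a

/-!
The union of a directed family `S` of conditions is a function, since any two members have a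
common extension, and it is again a condition.
Its domain is the union of `|S| < μ` sets of size `< μ`, hence small since `μ` is regular.
For `δ` in its domain, either nothing of the domain lies below `δ`, or some `x` with
`γ ≤ x < δ` does, so that `|S| ≤ γ < δ`; then the part of the domain below `δ` is the union
of `|S|` sets each of size `< δ` (each is bounded by a common extension with a condition
defined at `δ`), hence small since `δ` is regular. If `μ ≤ γ` the tail is empty and the empty
condition is a lower bound.
-/

open Cardinal Set

namespace FFCond

variable {D : Set Ordinal.{u}} {hi : Ordinal.{u}} {μ : Cardinal.{u}}

def dom (p : FFCond D hi μ) : Set Ordinal.{u} := {o | p.toFun o ≠ none}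

theorem mem_dom_of_toFun_eq_some {p : FFCond D hi μ} {o v : Ordinal.{u}}
    (h : p.toFun o = some v) : o ∈ p.dom := by
  simp [dom, h]

theorem dom_subset_of_le {p q : FFCond D hi μ} (h : p ≤ q) : q.dom ⊆ p.dom := fun o ho => by
  obtain ⟨v, hv⟩ := Option.ne_none_iff_exists'.1 ho
  exact mem_dom_of_toFun_eq_some (h o v hv)

theorem value_eq_of_le_of_le {c p q : FFCond D hi μ} (hp : c ≤ p) (hq : c ≤ q)
    {o v w : Ordinal.{u}} (hv : p.toFun o = some v) (hw : q.toFun o = some w) : v = w :=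
  Option.some_inj.1 ((hp o v hv).symm.trans (hq o w hw))

def empty (hμ : 0 < μ) : FFCond D hi μ where
  toFun _ := none
  dom_sub _ h := absurd rfl h
  dom_inacc _ h := absurd rfl h
  ran_lt _ _ h := by simp at h
  below _ h := absurd rfl h
  small := by simpa using hμ
  loc _ h := absurd rfl h

theorem empty_le (hD : D = ∅) (hμ : 0 < μ) (p : FFCond D hi μ) : empty hμ ≤ p := by
  intro o v hv
  have := p.dom_sub o (mem_dom_of_toFun_eq_some hv)
  simp [hD] at this

theorem mk_Iio_inter_dom_lt_of_le {c q : FFCond D hi μ} (hcq : c ≤ q) {δ : Ordinal.{u}}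
    (hδ : δ ∈ c.dom) : #↥(Iio δ ∩ q.dom) < lift.{u + 1} δ.card :=
  (mk_le_mk_of_subset (inter_subset_inter_right _ (dom_subset_of_le hcq))).trans_lt (c.loc δ hδ)

section sUnion

variable (S : Set (FFCond D hi μ))

open Classical in
noncomputable def sUnionFun (o : Ordinal.{u}) : Option Ordinal.{u} :=
  if h : ∃ p ∈ S, o ∈ p.dom then h.choose.toFun o else none

theorem sUnionFun_ne_none_iff {o : Ordinal.{u}} : sUnionFun S o ≠ none ↔ ∃ p ∈ S, o ∈ p.dom := by
  unfold sUnionFun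
  split_ifs with h
  · exact iff_of_true h.choose_spec.2 h
  · exact iff_of_false (· rfl) h

theorem setOf_sUnionFun_ne_none : {o | sUnionFun S o ≠ none} = ⋃ p ∈ S, p.dom := by
  ext o
  simp only [mem_ofPred_eq, sUnionFun_ne_none_iff, mem_iUnion₂, exists_prop]

variable {S}

theorem sUnionFun_eq_some_iff (hS : ∀ p ∈ S, ∀ q ∈ S, ∃ c, c ≤ p ∧ c ≤ q)
    {o v : Ordinal.{u}} : sUnionFun S o = some v ↔ ∃ p ∈ S, p.toFun o = some v := by
  unfold sUnionFun
  split_ifs with h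
  · obtain ⟨hpS, hpo⟩ := h.choose_spec
    obtain ⟨w, hw⟩ := Option.ne_none_iff_exists'.1 hpo
    refine ⟨fun hv => ⟨_, hpS, hv⟩, fun ⟨q, hqS, hqv⟩ => ?_⟩
    obtain ⟨c, hcp, hcq⟩ := hS _ hpS q hqS
    rw [hw, value_eq_of_le_of_le hcp hcq hw hqv]
  · refine iff_of_false (by simp) fun ⟨p, hpS, hpv⟩ => h ⟨p, hpS, mem_dom_of_toFun_eq_some hpv⟩

variable (hS : ∀ p ∈ S, ∀ q ∈ S, ∃ c, c ≤ p ∧ c ≤ q)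
include hS

theorem sUnionFun_below {δ : Ordinal.{u}} (hδ : sUnionFun S δ ≠ none) {x v : Ordinal.{u}}
    (hx : x < δ) (hxv : sUnionFun S x = some v) : v < δ := by
  obtain ⟨p, hpS, hδp⟩ := (sUnionFun_ne_none_iff S).1 hδ
  obtain ⟨q, hqS, hqv⟩ := (sUnionFun_eq_some_iff hS).1 hxv
  obtain ⟨c, hcp, hcq⟩ := hS p hpS q hqS
  exact c.below δ (dom_subset_of_le hcp hδp) x v hx (hcq x v hqv)

theorem mk_Iio_inter_setOf_sUnionFun_ne_none_lt (hSD : ∀ x ∈ D, #S ≤ lift.{u + 1} x.card)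
    {δ : Ordinal.{u}} (hδ : sUnionFun S δ ≠ none) :
    #↥(Iio δ ∩ {o | sUnionFun S o ≠ none}) < lift.{u + 1} δ.card := by
  obtain ⟨p, hpS, hδp⟩ := (sUnionFun_ne_none_iff S).1 hδ
  obtain ⟨hδreg, hδord⟩ := p.dom_inacc δ hδp
  rw [setOf_sUnionFun_ne_none, inter_iUnion₂]
  rcases (⋃ q ∈ S, Iio δ ∩ q.dom).eq_empty_or_nonempty with hempty | ⟨x, hx⟩
  · rw [hempty, mk_eq_zero]
    exact zero_lt_lift_iff.2 hδreg.pos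
  obtain ⟨q, hqS, hxδ, hxq⟩ := by simpa only [mem_iUnion₂, exists_prop] using hx
  have hSδ : #S < lift.{u + 1} δ.card := by
    refine (hSD x (q.dom_sub x hxq)).trans_lt (lift_lt.2 ?_)
    rwa [← Cardinal.lt_ord, ← hδord]
  refine (card_biUnion_lt_iff_forall_of_isRegular hδreg.isRegular.lift hSδ).2 fun q hqS => ?_
  obtain ⟨c, hcp, hcq⟩ := hS p hpS q hqS
  exact mk_Iio_inter_dom_lt_of_le hcq (dom_subset_of_le hcp hδp)

theorem exists_le_of_pairwise_compatible (hμ : μ.IsRegular) (hSμ : #S < lift.{u + 1} μ)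
    (hSD : ∀ x ∈ D, #S ≤ lift.{u + 1} x.card) : ∃ l : FFCond D hi μ, ∀ p ∈ S, l ≤ p := by
  refine ⟨⟨sUnionFun S, fun o ho => ?_, fun o ho => ?_, fun o v hv => ?_,
    fun δ hδ x v hx hxv => sUnionFun_below hS hδ hx hxv, ?_,
    fun δ hδ => mk_Iio_inter_setOf_sUnionFun_ne_none_lt hS hSD hδ⟩,
    fun p hpS o v hv => (sUnionFun_eq_some_iff hS).2 ⟨p, hpS, hv⟩⟩
  · obtain ⟨p, -, hop⟩ := (sUnionFun_ne_none_iff S).1 ho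
    exact p.dom_sub o hop
  · obtain ⟨p, -, hop⟩ := (sUnionFun_ne_none_iff S).1 ho
    exact p.dom_inacc o hop
  · obtain ⟨p, -, hpv⟩ := (sUnionFun_eq_some_iff hS).1 hv
    exact p.ran_lt o v hpv
  · change #↥{o | sUnionFun S o ≠ none} < _
    rw [setOf_sUnionFun_ne_none]
    exact (card_biUnion_lt_iff_forall_of_isRegular hμ.lift hSμ).2 fun p _ => p.small

end sUnion

end FFCond

theorem dirClosed_of_eq_empty {D : Set Ordinal.{u}} {hi : Ordinal.{u}} {μ : Cardinal.{u}}
    (hD : D = ∅) (hμ : 0 < μ) (γ : Cardinal.{u}) : DirClosed (FFCond D hi μ) γ :=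
  fun _ _ _ => ⟨FFCond.empty hμ, fun p _ => FFCond.empty_le hD hμ p⟩

theorem dirClosed_of_subset_Ico {γ μ : Cardinal.{u}} {D : Set Ordinal.{u}} {hi : Ordinal.{u}}
    (hμ : μ.IsRegular) (hD : D ⊆ Ico γ.ord μ.ord) : DirClosed (FFCond D hi μ) γ := by
  rcases lt_or_ge γ μ with hγμ | hμγ
  · intro S hSγ hdir
    refine FFCond.exists_le_of_pairwise_compatible
      (fun p hp q hq => (hdir p hp q hq).imp fun _ h => h.2) hμ
      (hSγ.trans_lt (lift_lt.2 hγμ)) fun x hx => hSγ.trans (lift_le.2 ?_)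
    exact Cardinal.ord_le.1 (hD hx).1
  · refine dirClosed_of_eq_empty (subset_empty_iff.1 ?_) hμ.pos γ
    exact hD.trans (Ico_eq_empty (not_lt.2 (ord_le_ord.2 hμγ))).le

theorem fastFunction_tails_directed_closed_general (γ μ : Cardinal.{u})
    (hμ : μ.IsInaccessible) :
    DirClosed (FFCond (Set.Ico γ.ord μ.ord) μ.ord μ) γ ∧
      DirClosed (FFCond (Set.Ioo γ.ord μ.ord) μ.ord μ) γ :=
  ⟨dirClosed_of_subset_Ico hμ.isRegular subset_rfl,
    dirClosed_of_subset_Ico hμ.isRegular Ioo_subset_Ico_self⟩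

/-- If `γ ≤ μ` are inaccessible, then the tails `F_{[γ,μ)}` and `F_{(γ,μ)}` of
fast function forcing are `γ⁺`-directed closed. -/
theorem fastFunction_tails_directed_closed (γ μ : Cardinal.{u})
    (hγ : γ.IsInaccessible) (hμ : μ.IsInaccessible) (hle : γ ≤ μ) :
    DirClosed (FFCond (Set.Ico γ.ord μ.ord) μ.ord μ) γ ∧
      DirClosed (FFCond (Set.Ioo γ.ord μ.ord) μ.ord μ) γ :=
  fastFunction_tails_directed_closed_general γ μ hμ
end

section
/- Fast function forcing factors below a condition: if p ∈ F_μ and γ ∈ dom(p), then setting p_0 = p ↾ γ and p_1 = p ↾ [γ, μ), we have p_0 ∈ F_γ, p_1 ∈ F_{[γ,μ)}, and the cone F_μ/p = { r ∈ F_μ : r ≤ p } is isomorphic to the product (F_γ/p_0) × (F_{[γ,μ)}/p_1). -/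
universe u

/-- Restriction of a partial function to arguments `< γ`. -/
noncomputable def restrictLT (f : Ordinal.{u} → Option Ordinal.{u}) (γ : Ordinal.{u}) :
    Ordinal.{u} → Option Ordinal.{u} :=
  fun o => if o < γ then f o else none

/-- Restriction of a partial function to arguments `≥ γ`. -/
noncomputable def restrictGE (f : Ordinal.{u} → Option Ordinal.{u}) (γ : Ordinal.{u}) :
    Ordinal.{u} → Option Ordinal.{u} :=
  fun o => if γ ≤ o then f o else none


/-!
Below `p`, every condition `r` has `γ` in its domain, so `r ↾ γ` has size and values bounded
by `γ` and is a condition of `F_γ`. Conversely, extensions of `p ↾ γ` and of `p ↾ [γ, μ)` glue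
back to an extension of `p`: the glued function stays small because its lower part has size
`< |γ|`, while `μ` and every point of the upper domain are infinite cardinals above `|γ|`.
Restricting and gluing are mutually inverse and monotone.
-/

open Cardinal Set

def pdom (f : Ordinal.{u} → Option Ordinal.{u}) : Set Ordinal.{u} := {o | f o ≠ none}

noncomputable def piecewiseLT (f g : Ordinal.{u} → Option Ordinal.{u}) (γ : Ordinal.{u}) :
    Ordinal.{u} → Option Ordinal.{u} :=
  fun o => if o < γ then f o else g o

lemma Cardinal.mk_union_lt {α : Type*} {s t : Set α} {c : Cardinal} (hc : ℵ₀ ≤ c)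
    (hs : #s < c) (ht : #t < c) : #(s ∪ t : Set α) < c :=
  (mk_union_le s t).trans_lt (add_lt_of_lt hc hs ht)

section PartialFunctions

variable {f g : Ordinal.{u} → Option Ordinal.{u}} {γ o v : Ordinal.{u}}

lemma restrictLT_eq_some : restrictLT f γ o = some v ↔ o < γ ∧ f o = some v := by
  unfold restrictLT; split_ifs <;> simp_all

lemma restrictGE_eq_some : restrictGE f γ o = some v ↔ γ ≤ o ∧ f o = some v := by
  unfold restrictGE; split_ifs <;> simp_all

lemma mem_pdom_restrictLT : o ∈ pdom (restrictLT f γ) ↔ o < γ ∧ o ∈ pdom f := by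
  simp only [pdom, mem_ofPred_eq, restrictLT]; split_ifs <;> simp_all

lemma mem_pdom_restrictGE : o ∈ pdom (restrictGE f γ) ↔ γ ≤ o ∧ o ∈ pdom f := by
  simp only [pdom, mem_ofPred_eq, restrictGE]; split_ifs <;> simp_all

lemma piecewiseLT_of_lt (h : o < γ) : piecewiseLT f g γ o = f o := if_pos h

lemma piecewiseLT_of_le (h : γ ≤ o) : piecewiseLT f g γ o = g o := if_neg h.not_gt

lemma pdom_piecewiseLT_subset : pdom (piecewiseLT f g γ) ⊆ pdom f ∪ pdom g := by
  intro o ho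
  simp only [pdom, mem_ofPred_eq, piecewiseLT, mem_union] at *
  split_ifs at ho
  exacts [Or.inl ho, Or.inr ho]

lemma Iio_inter_pdom_piecewiseLT_subset {δ : Ordinal.{u}} :
    Iio δ ∩ pdom (piecewiseLT f g γ) ⊆ pdom f ∪ (Iio δ ∩ pdom g) := fun _ ho =>
  (pdom_piecewiseLT_subset ho.2).imp id fun h => ⟨ho.1, h⟩

lemma piecewiseLT_restrictLT_restrictGE :
    piecewiseLT (restrictLT f γ) (restrictGE f γ) γ = f := by
  funext o
  unfold piecewiseLT restrictLT restrictGE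
  split_ifs <;> simp_all [not_lt]

lemma restrictLT_piecewiseLT (hf : pdom f ⊆ Iio γ) : restrictLT (piecewiseLT f g γ) γ = f := by
  funext o
  unfold restrictLT piecewiseLT
  split_ifs with ho
  · rfl
  · by_contra hfo
    exact ho (hf (Ne.symm hfo))

lemma restrictGE_piecewiseLT (hg : pdom g ⊆ Ici γ) : restrictGE (piecewiseLT f g γ) γ = g := by
  funext o
  unfold restrictGE piecewiseLT
  split_ifs with ho ho'
  · exact absurd ho (not_le.mpr ho')
  · rfl
  · by_contra hgo
    exact ho (hg (Ne.symm hgo))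

end PartialFunctions

namespace FFCond

variable {D : Set Ordinal.{u}} {hi : Ordinal.{u}} {μ : Cardinal.{u}}

@[ext]
lemma ext {p q : FFCond D hi μ} (h : p.toFun = q.toFun) : p = q := by
  cases p; cases q; cases h; rfl

lemma mk_pdom_lt (p : FFCond D hi μ) : #(pdom p.toFun) < lift.{u + 1} μ := p.small

lemma mk_Iio_inter_pdom_lt (p : FFCond D hi μ) {γ : Ordinal.{u}} (hγ : γ ∈ pdom p.toFun) :
    #(Iio γ ∩ pdom p.toFun : Set Ordinal.{u}) < lift.{u + 1} γ.card :=
  p.loc γ hγ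

lemma aleph0_le_card_of_mem_pdom (p : FFCond D hi μ) {γ : Ordinal.{u}}
    (hγ : γ ∈ pdom p.toFun) : ℵ₀ ≤ lift.{u + 1} γ.card :=
  aleph0_le_lift.mpr (p.dom_inacc γ hγ).1.aleph0_lt.le

lemma aleph0_le_of_mem_pdom (p : FFCond (Iio μ.ord) hi μ) {γ : Ordinal.{u}}
    (hγ : γ ∈ pdom p.toFun) : ℵ₀ ≤ μ :=
  (p.dom_inacc γ hγ).1.aleph0_lt.le.trans (lt_ord.mp (p.dom_sub γ hγ)).le

lemma mem_pdom_of_le {p q : FFCond D hi μ} (h : p ≤ q) {γ : Ordinal.{u}}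
    (hγ : γ ∈ pdom q.toFun) : γ ∈ pdom p.toFun := by
  obtain ⟨v, hv⟩ := Option.ne_none_iff_exists'.mp hγ
  simp [pdom, h γ v hv]

noncomputable def restrictBelow (p : FFCond D hi μ) (γ : Ordinal.{u})
    (hγ : γ ∈ pdom p.toFun) : FFCond (Iio γ) γ γ.card where
  toFun := restrictLT p.toFun γ
  dom_sub _ h := (mem_pdom_restrictLT.mp h).1
  dom_inacc o h := p.dom_inacc o (mem_pdom_restrictLT.mp h).2
  ran_lt o v h := p.below γ hγ o v (restrictLT_eq_some.mp h).1 (restrictLT_eq_some.mp h).2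
  below δ hδ x v hx h :=
    p.below δ (mem_pdom_restrictLT.mp hδ).2 x v hx (restrictLT_eq_some.mp h).2
  small := (mk_subtype_le_of_subset fun _ hx => mem_pdom_restrictLT.mp hx).trans_lt
    (p.mk_Iio_inter_pdom_lt hγ)
  loc _ hδ :=
    (mk_subtype_le_of_subset fun _ hx => ⟨hx.1, (mem_pdom_restrictLT.mp hx.2).2⟩).trans_lt
      (p.mk_Iio_inter_pdom_lt (mem_pdom_restrictLT.mp hδ).2)

noncomputable def restrictAbove (p : FFCond (Iio hi) hi μ) (γ : Ordinal.{u}) :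
    FFCond (Ico γ hi) hi μ where
  toFun := restrictGE p.toFun γ
  dom_sub o h := ⟨(mem_pdom_restrictGE.mp h).1, p.dom_sub o (mem_pdom_restrictGE.mp h).2⟩
  dom_inacc o h := p.dom_inacc o (mem_pdom_restrictGE.mp h).2
  ran_lt o v h := p.ran_lt o v (restrictGE_eq_some.mp h).2
  below δ hδ x v hx h :=
    p.below δ (mem_pdom_restrictGE.mp hδ).2 x v hx (restrictGE_eq_some.mp h).2
  small := (mk_subtype_le_of_subset fun _ hx => (mem_pdom_restrictGE.mp hx).2).trans_lt
    p.mk_pdom_lt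
  loc _ hδ :=
    (mk_subtype_le_of_subset fun _ hx => ⟨hx.1, (mem_pdom_restrictGE.mp hx.2).2⟩).trans_lt
      (p.mk_Iio_inter_pdom_lt (mem_pdom_restrictGE.mp hδ).2)

lemma restrictBelow_mono {p q : FFCond D hi μ} (h : p ≤ q) {γ : Ordinal.{u}}
    (hq : γ ∈ pdom q.toFun) : p.restrictBelow γ (mem_pdom_of_le h hq) ≤ q.restrictBelow γ hq :=
  fun o v hv => restrictLT_eq_some.mpr
    ⟨(restrictLT_eq_some.mp hv).1, h o v (restrictLT_eq_some.mp hv).2⟩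

lemma restrictAbove_mono {p q : FFCond (Iio hi) hi μ} (h : p ≤ q) (γ : Ordinal.{u}) :
    p.restrictAbove γ ≤ q.restrictAbove γ :=
  fun o v hv => restrictGE_eq_some.mpr
    ⟨(restrictGE_eq_some.mp hv).1, h o v (restrictGE_eq_some.mp hv).2⟩

section Glue

variable {γ : Ordinal.{u}}

noncomputable def glue (hμ : ℵ₀ ≤ μ) (hγ : γ ≤ μ.ord) (q₀ : FFCond (Iio γ) γ γ.card)
    (q₁ : FFCond (Ico γ μ.ord) μ.ord μ) : FFCond (Iio μ.ord) μ.ord μ where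
  toFun := piecewiseLT q₀.toFun q₁.toFun γ
  dom_sub o h := by
    rcases lt_or_ge o γ with ho | ho
    · exact ho.trans_le hγ
    · exact (q₁.dom_sub o (by rwa [piecewiseLT_of_le ho] at h)).2
  dom_inacc o h := by
    rcases lt_or_ge o γ with ho | ho
    · exact q₀.dom_inacc o (by rwa [piecewiseLT_of_lt ho] at h)
    · exact q₁.dom_inacc o (by rwa [piecewiseLT_of_le ho] at h)
  ran_lt o v h := by
    rcases lt_or_ge o γ with ho | ho
    · exact (q₀.ran_lt o v (by rwa [piecewiseLT_of_lt ho] at h)).trans_le hγ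
    · exact q₁.ran_lt o v (by rwa [piecewiseLT_of_le ho] at h)
  below δ hδ x v hx h := by
    rcases lt_or_ge x γ with hxγ | hxγ
    · rw [piecewiseLT_of_lt hxγ] at h
      rcases lt_or_ge δ γ with hδγ | hδγ
      · exact q₀.below δ (by rwa [piecewiseLT_of_lt hδγ] at hδ) x v hx h
      · exact (q₀.ran_lt x v h).trans_le hδγ
    · rw [piecewiseLT_of_le (hxγ.trans hx.le)] at hδ
      exact q₁.below δ hδ x v hx (by rwa [piecewiseLT_of_le hxγ] at h)
  small := (mk_subtype_le_of_subset fun _ hx => pdom_piecewiseLT_subset hx).trans_lt <|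
    mk_union_lt (aleph0_le_lift.mpr hμ)
      (q₀.mk_pdom_lt.trans_le (lift_le.mpr (card_le_of_le_ord hγ))) q₁.mk_pdom_lt
  loc δ hδ := by
    rcases lt_or_ge δ γ with hδγ | hδγ
    · rw [piecewiseLT_of_lt hδγ] at hδ
      refine (mk_subtype_le_of_subset fun x hx => ⟨hx.1, ?_⟩).trans_lt
        (q₀.mk_Iio_inter_pdom_lt hδ)
      have hxδ : piecewiseLT q₀.toFun q₁.toFun γ x ≠ none := hx.2
      rwa [piecewiseLT_of_lt (hx.1.trans hδγ)] at hxδ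
    · rw [piecewiseLT_of_le hδγ] at hδ
      refine (mk_subtype_le_of_subset fun _ hx =>
        Iio_inter_pdom_piecewiseLT_subset hx).trans_lt ?_
      exact mk_union_lt (q₁.aleph0_le_card_of_mem_pdom hδ)
        (q₀.mk_pdom_lt.trans_le (lift_le.mpr (Ordinal.card_le_card hδγ)))
        (q₁.mk_Iio_inter_pdom_lt hδ)

variable (hμ : ℵ₀ ≤ μ) (hγ : γ ≤ μ.ord)

lemma glue_mono {q₀ q₀' : FFCond (Iio γ) γ γ.card} {q₁ q₁' : FFCond (Ico γ μ.ord) μ.ord μ}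
    (h₀ : q₀ ≤ q₀') (h₁ : q₁ ≤ q₁') : glue hμ hγ q₀ q₁ ≤ glue hμ hγ q₀' q₁' := by
  intro o v hv
  rcases lt_or_ge o γ with ho | ho
  · simp only [glue, piecewiseLT_of_lt ho] at hv ⊢
    exact h₀ o v hv
  · simp only [glue, piecewiseLT_of_le ho] at hv ⊢
    exact h₁ o v hv

lemma glue_restrictBelow_restrictAbove (p : FFCond (Iio μ.ord) μ.ord μ)
    (hp : γ ∈ pdom p.toFun) :
    glue hμ hγ (p.restrictBelow γ hp) (p.restrictAbove γ) = p :=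
  ext piecewiseLT_restrictLT_restrictGE

lemma restrictBelow_glue (q₀ : FFCond (Iio γ) γ γ.card) (q₁ : FFCond (Ico γ μ.ord) μ.ord μ)
    (h : γ ∈ pdom (glue hμ hγ q₀ q₁).toFun) : (glue hμ hγ q₀ q₁).restrictBelow γ h = q₀ :=
  ext (restrictLT_piecewiseLT q₀.dom_sub)

lemma restrictAbove_glue (q₀ : FFCond (Iio γ) γ γ.card) (q₁ : FFCond (Ico γ μ.ord) μ.ord μ) :
    (glue hμ hγ q₀ q₁).restrictAbove γ = q₁ :=
  ext (restrictGE_piecewiseLT fun o ho => (q₁.dom_sub o ho).1)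

end Glue

noncomputable def coneOrderIso (p : FFCond (Iio μ.ord) μ.ord μ) {γ : Ordinal.{u}}
    (hγ : γ ∈ pdom p.toFun) :
    {r // r ≤ p} ≃o {r // r ≤ p.restrictBelow γ hγ} × {r // r ≤ p.restrictAbove γ} :=
  have hμ := p.aleph0_le_of_mem_pdom hγ
  have hγμ : γ ≤ μ.ord := (p.dom_sub γ hγ).le
  have glue_le (q : {r // r ≤ p.restrictBelow γ hγ} × {r // r ≤ p.restrictAbove γ}) :
      glue hμ hγμ q.1.1 q.2.1 ≤ p :=
    (glue_mono hμ hγμ q.1.2 q.2.2).trans_eq (glue_restrictBelow_restrictAbove hμ hγμ p hγ)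
  Equiv.toOrderIso
    { toFun r := (⟨r.1.restrictBelow γ (mem_pdom_of_le r.2 hγ), restrictBelow_mono r.2 hγ⟩,
        ⟨r.1.restrictAbove γ, restrictAbove_mono r.2 γ⟩)
      invFun q := ⟨glue hμ hγμ q.1.1 q.2.1, glue_le q⟩
      left_inv r :=
        Subtype.ext (glue_restrictBelow_restrictAbove hμ hγμ r.1 (mem_pdom_of_le r.2 hγ))
      right_inv q :=
        Prod.ext (Subtype.ext (restrictBelow_glue hμ hγμ _ _ (mem_pdom_of_le (glue_le q) hγ)))
          (Subtype.ext (restrictAbove_glue hμ hγμ _ _)) }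
    (fun _ s h => Prod.mk_le_mk.mpr
      ⟨restrictBelow_mono h (mem_pdom_of_le s.2 hγ), restrictAbove_mono h γ⟩)
    (fun _ _ h => glue_mono hμ hγμ h.1 h.2)

end FFCond

theorem fastFunction_factors_general (μ : Cardinal.{u})
    (p : FFCond (Set.Iio μ.ord) μ.ord μ) (γ : Ordinal.{u}) (hγ : p.toFun γ ≠ none) :
    ∃ (p₀ : FFCond (Set.Iio γ) γ γ.card) (p₁ : FFCond (Set.Ico γ μ.ord) μ.ord μ),
      p₀.toFun = restrictLT p.toFun γ ∧ p₁.toFun = restrictGE p.toFun γ ∧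
      ∃ e : {r : FFCond (Set.Iio μ.ord) μ.ord μ // r ≤ p} ≃o
          ({r : FFCond (Set.Iio γ) γ γ.card // r ≤ p₀} ×
            {r : FFCond (Set.Ico γ μ.ord) μ.ord μ // r ≤ p₁}),
        ∀ r, ((e r).1.1.toFun = restrictLT r.1.toFun γ ∧
          (e r).2.1.toFun = restrictGE r.1.toFun γ) :=
  ⟨_, _, rfl, rfl, p.coneOrderIso hγ, fun _ => ⟨rfl, rfl⟩⟩

/-- Fast function forcing factors below a condition: if `p ∈ F_μ` and
`γ ∈ dom p`, then `p₀ = p ↾ γ ∈ F_γ`, `p₁ = p ↾ [γ,μ) ∈ F_{[γ,μ)}`, and the cone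
`F_μ / p` is order-isomorphic to `(F_γ / p₀) × (F_{[γ,μ)} / p₁)` via restriction. -/
theorem fastFunction_factors (μ : Cardinal.{u}) (hμ : μ.IsInaccessible)
    (p : FFCond (Set.Iio μ.ord) μ.ord μ) (γ : Ordinal.{u}) (hγ : p.toFun γ ≠ none) :
    ∃ (p₀ : FFCond (Set.Iio γ) γ γ.card) (p₁ : FFCond (Set.Ico γ μ.ord) μ.ord μ),
      p₀.toFun = restrictLT p.toFun γ ∧ p₁.toFun = restrictGE p.toFun γ ∧
      ∃ e : {r : FFCond (Set.Iio μ.ord) μ.ord μ // r ≤ p} ≃o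
          ({r : FFCond (Set.Iio γ) γ γ.card // r ≤ p₀} ×
            {r : FFCond (Set.Ico γ μ.ord) μ.ord μ // r ≤ p₁}),
        ∀ r, ((e r).1.1.toFun = restrictLT r.1.toFun γ ∧
          (e r).2.1.toFun = restrictGE r.1.toFun γ) :=
  fastFunction_factors_general μ p γ hγ
end

section
/- If μ is a singular cardinal, then club stationary reflection CSR(μ^+) fails: there is a stationary S ⊆ μ^+ ∩ cof(< μ) whose set of reflection points does not contain a club relative to the relevant cofinality. -/
universe u

/-- `C` is a club (closed unbounded) subset of the ordinal `δ`. -/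
def ClubIn (C : Set Ordinal.{u}) (δ : Ordinal.{u}) : Prop :=
  (∀ c ∈ C, c < δ) ∧ (∀ a < δ, ∃ c ∈ C, a < c) ∧
    ∀ o, o < δ → o ≠ 0 → (∀ b < o, ∃ c ∈ C, b < c ∧ c < o) → o ∈ C

/-- `S` is a stationary subset of the ordinal `δ`. -/
def StatIn (S : Set Ordinal.{u}) (δ : Ordinal.{u}) : Prop :=
  (∀ s ∈ S, s < δ) ∧ ∀ C : Set Ordinal.{u}, ClubIn C δ → (S ∩ C).Nonempty

set_option linter.deprecated false

section Aux

open Cardinal Classical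

/-- There is no club in a successor ordinal. -/
theorem not_clubIn_succ {C : Set Ordinal.{u}} {β : Ordinal.{u}}
    (hC : ClubIn C (β + 1)) : False := by
  obtain ⟨c, hcC, hbc⟩ := hC.2.1 β (by rw [Ordinal.add_one_eq_succ]; exact Order.lt_succ β)
  have h1 : c < β + 1 := hC.1 c hcC
  have h2 : β + 1 ≤ c := by rw [Ordinal.add_one_eq_succ]; exact Order.succ_le_of_lt hbc
  exact absurd h1 (not_lt.mpr h2)

/-- A choice function picking, above the strict sup of previous values, an element of `C`. -/
noncomputable def csrNext (C : Set Ordinal.{u}) : Ordinal.{u} → Ordinal.{u} :=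
  Ordinal.lt_wf.fix fun j ih =>
    if h : ∃ c ∈ C, Ordinal.blsub.{u, u} j (fun i hi => ih i hi) < c then h.choose else 0

theorem csrNext_def (C : Set Ordinal.{u}) (j : Ordinal.{u}) :
    csrNext C j =
      if h : ∃ c ∈ C, Ordinal.blsub.{u, u} j (fun i _ => csrNext C i) < c then h.choose
      else 0 :=
  Ordinal.lt_wf.fix_eq _ j

theorem csrNext_spec {C : Set Ordinal.{u}} {j : Ordinal.{u}}
    (hex : ∃ c ∈ C, Ordinal.blsub.{u, u} j (fun i _ => csrNext C i) < c) :
    csrNext C j ∈ C ∧ Ordinal.blsub.{u, u} j (fun i _ => csrNext C i) < csrNext C j := by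
  rw [csrNext_def C j, dif_pos hex]
  exact hex.choose_spec

/-- Every club in (the ordinal of) a regular cardinal contains points of any
prescribed smaller regular cofinality. -/
theorem exists_mem_club_cof {ρ lam : Cardinal.{u}} (hρ : ρ.IsRegular) (hlam : lam.IsRegular)
    (hlt : ρ < lam) {C : Set Ordinal.{u}} (hC : ClubIn C lam.ord) :
    ∃ γ ∈ C, γ.cof = ρ := by
  have hcofδ : lam.ord.cof = lam := hlam.cof_eq
  have hρord : Order.IsSuccLimit ρ.ord := Cardinal.isSuccLimit_ord hρ.1
  set F := csrNext C with hF
  have key : ∀ j < ρ.ord, F j ∈ C ∧ Ordinal.blsub.{u, u} j (fun i _ => F i) < F j := by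
    intro j
    induction j using Ordinal.induction with
    | h j ih =>
      intro hj
      have hblt : Ordinal.blsub.{u, u} j (fun i _ => F i) < lam.ord := by
        apply Ordinal.blsub_lt_ord
        · rw [hcofδ]
          exact (Cardinal.lt_ord.mp hj).trans hlt
        · intro i hi
          exact hC.1 _ (ih i hi (hi.trans hj)).1
      exact csrNext_spec (hC.2.1 _ hblt)
  have hmem : ∀ j < ρ.ord, F j ∈ C := fun j hj => (key j hj).1
  have hltδ : ∀ j < ρ.ord, F j < lam.ord := fun j hj => hC.1 _ (hmem j hj)
  have hmono : ∀ i j, i < j → j < ρ.ord → F i < F j := fun i j hij hj =>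
    (Ordinal.lt_blsub (fun i _ => F i) i hij).trans (key j hj).2
  set γ := Ordinal.blsub.{u, u} ρ.ord (fun i _ => F i) with hγ
  have hγδ : γ < lam.ord := by
    apply Ordinal.blsub_lt_ord
    · rw [hcofδ, Cardinal.card_ord]; exact hlt
    · exact hltδ
  have hpos : 0 < γ :=
    lt_of_le_of_lt (zero_le (a := _)) (Ordinal.lt_blsub (fun i _ => F i) 0 hρord.pos)
  have hγC : γ ∈ C := by
    apply hC.2.2 γ hγδ hpos.ne'
    intro b hb
    obtain ⟨i, hi, hbi⟩ := Ordinal.lt_blsub_iff.mp hb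
    have hsi : Order.succ i < ρ.ord := hρord.succ_lt hi
    exact ⟨F (Order.succ i), hmem _ hsi,
      lt_of_le_of_lt hbi (hmono i _ (Order.lt_succ i) hsi),
      Ordinal.lt_blsub (fun i _ => F i) _ hsi⟩
  refine ⟨γ, hγC, le_antisymm ?_ ?_⟩
  · have := Ordinal.cof_blsub_le (fun i (_ : i < ρ.ord) => F i)
    rwa [Cardinal.card_ord] at this
  · by_contra h2
    push_neg at h2
    obtain ⟨ι, g, hglsub, hgcard⟩ := Ordinal.exists_lsub_cof γ
    have hι : #ι < ρ := by rw [hgcard]; exact h2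
    have hgx : ∀ x, g x < γ := fun x => hglsub ▸ Ordinal.lt_lsub g x
    choose j hj hle using fun x => Ordinal.lt_blsub_iff.mp (hgx x)
    have hsup : iSup j < ρ.ord :=
      Ordinal.iSup_lt_of_lt_cof (by rw [hρ.cof_eq]; exact hι) hj
    have hsucc : Order.succ (iSup j) < ρ.ord := hρord.succ_lt hsup
    have hγle : γ ≤ F (Order.succ (iSup j)) := by
      rw [← hglsub]
      apply Ordinal.lsub_le
      intro x
      exact lt_of_le_of_lt (hle x)
        (hmono _ _ (lt_of_le_of_lt (Ordinal.le_iSup j x) (Order.lt_succ _)) hsucc)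
    exact absurd (Ordinal.lt_blsub (fun i _ => F i) _ hsucc) (not_lt.mpr hγle)

/-- Every ordinal of infinite cofinality has a club all of whose members have
cofinality at most that cofinality. -/
theorem exists_club_small_cof {γ : Ordinal.{u}} (h : Cardinal.aleph0 ≤ γ.cof) :
    ∃ D : Set Ordinal.{u}, ClubIn D γ ∧ ∀ o ∈ D, o.cof ≤ γ.cof := by
  obtain ⟨f, hf⟩ := Ordinal.exists_fundamental_sequence γ
  have hγlim : Order.IsSuccLimit γ := Ordinal.aleph0_le_cof.mp h
  refine ⟨{o | o < γ ∧ ((∃ i hi, o = Order.succ (f i hi)) ∨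
      ∀ b < o, ∃ i hi, b < f i hi ∧ f i hi < o)}, ⟨fun o ho => ho.1, ?_, ?_⟩, ?_⟩
  · -- unbounded
    intro a ha
    obtain ⟨i, hi, hai⟩ := Ordinal.lt_blsub_iff.mp (hf.blsub_eq.symm ▸ ha)
    exact ⟨Order.succ (f i hi), ⟨hγlim.succ_lt (hf.lt hi), Or.inl ⟨i, hi, rfl⟩⟩,
      lt_of_le_of_lt hai (Order.lt_succ _)⟩
  · -- closed
    intro o ho hne H
    refine ⟨ho, Or.inr fun b hb => ?_⟩
    obtain ⟨c, hcD, hbc, hco⟩ := H b hb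
    rcases hcD.2 with ⟨i, hi, hceq⟩ | hlim
    · obtain ⟨c', hc'D, hcc', hc'o⟩ := H c hco
      rcases hc'D.2 with ⟨k, hk, hc'eq⟩ | hlim'
      · subst hceq; subst hc'eq
        have hik : f i hi < f k hk := Order.succ_lt_succ_iff.mp hcc'
        exact ⟨k, hk, lt_of_le_of_lt (Order.lt_succ_iff.mp hbc) hik,
          lt_trans (Order.lt_succ _) hc'o⟩
      · obtain ⟨k, hk, h1, h2⟩ := hlim' b (hbc.trans hcc')
        exact ⟨k, hk, h1, h2.trans hc'o⟩
    · obtain ⟨k, hk, h1, h2⟩ := hlim b hbc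
      exact ⟨k, hk, h1, h2.trans hco⟩
  · -- small cofinality
    rintro o ⟨ho, hoD⟩
    rcases hoD with ⟨i, hi, rfl⟩ | hlim
    · rw [Ordinal.cof_succ]
      exact le_trans Cardinal.one_lt_aleph0.le h
    · rcases eq_or_ne o 0 with rfl | hne
      · simp
      · have hopos : 0 < o := pos_iff_ne_zero.mpr hne
        obtain ⟨i₀, hi₀, hoi₀⟩ := Ordinal.lt_blsub_iff.mp (hf.blsub_eq.symm ▸ ho)
        set e : i₀.ToType → Set.Iio i₀ := ⇑(Ordinal.ToType.mk (o := i₀)).symm with he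
        set g : i₀.ToType → Ordinal.{u} := fun t =>
          if f (e t).1 ((e t).2.trans hi₀) < o then f (e t).1 ((e t).2.trans hi₀) else 0
          with hg
        have claim1 : ∀ t, g t < o := by
          intro t
          rw [hg]
          dsimp only
          split
          · assumption
          · exact hopos
        have claim2 : ∀ b < o, ∃ t, b < g t := by
          intro b hb
          obtain ⟨k, hk, hbk, hko⟩ := hlim b hb
          have hki₀ : k < i₀ := by
            by_contra hle
            push_neg at hle
            exact absurd (lt_of_lt_of_le hko hoi₀) (not_lt.mpr (hf.monotone hi₀ hk hle))
          refine ⟨Ordinal.ToType.mk (o := i₀) ⟨k, hki₀⟩, ?_⟩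
          have het : e (Ordinal.ToType.mk (o := i₀) ⟨k, hki₀⟩) = ⟨k, hki₀⟩ := by
            rw [he]; exact (Ordinal.ToType.mk (o := i₀)).symm_apply_apply _
          rw [hg]
          dsimp only
          rw [het]
          simpa [hko] using hbk
        have hsupeq : iSup g = o := by
          apply le_antisymm
          · exact Ordinal.iSup_le fun t => (claim1 t).le
          · by_contra hlt
            push_neg at hlt
            obtain ⟨t, ht⟩ := claim2 _ hlt
            exact absurd (Ordinal.le_iSup g t) (not_le.mpr ht)
        have hcof : o.cof ≤ #i₀.ToType := by
          have := Ordinal.cof_iSup_le (f := g) (by rw [hsupeq]; exact claim1)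
          rwa [hsupeq] at this
        calc o.cof ≤ #i₀.ToType := hcof
          _ = i₀.card := Cardinal.mk_toType i₀
          _ ≤ γ.cof := (Cardinal.lt_ord.mp hi₀).le

end Aux

/-- Club stationary reflection fails at the successor of a singular cardinal `μ`:
there is a stationary subset `S` of `μ⁺ ∩ cof(< μ)` such that for every club
`C ⊆ μ⁺` there is a point `γ ∈ C` of cofinality `cf(μ)` at which `S` does not
reflect.  (By Solovay splitting.) -/
theorem csr_fails_at_singular_successor (μ : Cardinal.{u})
    (hμ : ℵ₀ ≤ μ) (hsing : ¬μ.IsRegular) :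
    ∃ S : Set Ordinal.{u},
      StatIn S (Order.succ μ).ord ∧ (∀ o ∈ S, o.cof < μ) ∧
      ∀ C : Set Ordinal.{u}, ClubIn C (Order.succ μ).ord →
        ∃ γ ∈ C, γ.cof = μ.ord.cof ∧
          ∃ D : Set Ordinal.{u}, ClubIn D γ ∧ (S ∩ D) = ∅ := by
  by_cases hinf : Cardinal.aleph0 ≤ μ
  · -- `μ` is an infinite non-regular (hence singular) cardinal
    set ν := μ.ord.cof with hν
    have hνinf : Cardinal.aleph0 ≤ ν :=
      Ordinal.aleph0_le_cof.mpr (Cardinal.isSuccLimit_ord hinf)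
    have hνreg : ν.IsRegular := ⟨hνinf, le_of_eq (Ordinal.cof_cof μ.ord).symm⟩
    have hνμ : ν < μ :=
      lt_of_le_of_ne (Ordinal.cof_ord_le μ) fun hh => hsing ⟨hinf, le_of_eq hh.symm⟩
    set κ := Order.succ ν with hκ
    have hκreg : κ.IsRegular := Cardinal.isRegular_succ hνinf
    have hκμ : κ < μ :=
      lt_of_le_of_ne (Order.succ_le_of_lt hνμ) fun hh => hsing (hh ▸ hκreg)
    have hlreg : (Order.succ μ).IsRegular := Cardinal.isRegular_succ hinf
    have hκl : κ < Order.succ μ := hκμ.trans (Order.lt_succ μ)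
    refine ⟨{α | α < (Order.succ μ).ord ∧ α.cof = κ},
      ⟨fun s hs => hs.1, fun C hC => ?_⟩, fun o ho => ho.2 ▸ hκμ, fun C hC => ?_⟩
    · obtain ⟨γ, hγC, hγcof⟩ := exists_mem_club_cof hκreg hlreg hκl hC
      exact ⟨γ, ⟨hC.1 _ hγC, hγcof⟩, hγC⟩
    · obtain ⟨γ, hγC, hγcof⟩ :=
        exists_mem_club_cof hνreg hlreg (hνμ.trans (Order.lt_succ μ)) hC
      obtain ⟨D, hD, hDcof⟩ := exists_club_small_cof (γ := γ) (hγcof ▸ hνinf)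
      refine ⟨γ, hγC, hγcof, D, hD, ?_⟩
      rw [Set.eq_empty_iff_forall_notMem]
      rintro o ⟨hoS, hoD⟩
      have h1 : o.cof = κ := hoS.2
      have h2 : o.cof ≤ ν := hγcof ▸ hDcof o hoD
      rw [h1] at h2
      exact absurd h2 (not_le.mpr (Order.lt_succ ν))
  · -- `μ` is finite, so `(Order.succ μ).ord` is a successor ordinal and has no clubs
    obtain ⟨n, rfl⟩ := Cardinal.lt_aleph0.mp (not_le.mp hinf)
    have hord : (Order.succ (n : Cardinal.{u})).ord = (n : Ordinal.{u}) + 1 := by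
      rw [← Cardinal.nat_succ, Cardinal.ord_nat, Nat.cast_succ]
    refine ⟨∅, ⟨by simp, fun C hC => ?_⟩, by simp, fun C hC => ?_⟩
    · rw [hord] at hC
      exact (not_clubIn_succ hC).elim
    · rw [hord] at hC
      exact (not_clubIn_succ hC).elim
end
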